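/- In the concrete quasi-free CAR model with λ : ℤ → ℝ, 0 < λ_l < 1: let L = {l₁ < ... < l_p} be a finite subset of ℤ. Then there exists a function c assigning to each L₁ ⊆ L a nonzero real number c(L₁) such that for all finite subsets I = {i₁ < ... < i_n} and J = {j₁ < ... < j_m} of ℤ with I, J, L pairwise disjoint, there exist signs σ(I,L₁,J) ∈ {+1,−1} with (a_{i₁}∘⋯∘a_{i_n})∘(a_{l₁}∘⋯∘a_{l_p})∘(a_{l_p}*∘⋯∘a_{l₁}*)∘(a_{j_m}*∘⋯∘a_{j₁}*) Ω = Σ_{L₁ ⊆ L} σ(I,L₁,J)·(∏_{i ∈ I} √(1−λ_i))·(∏_{j ∈ J} √(λ_j))·c(L₁)·e_{(I∪L₁, L₁∪J)}. In particular every coefficient in this expansion over the basis vectors e_{(I∪L₁, L₁∪J)}, L₁ ⊆ L, is a nonzero real number. -/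

import Mathlib

/-!
On a basis vector `e (A, B)` with `l ∉ A ∪ B`, the adjoint `a_l*` acts as `±√λ_l` times
`e (A, B ∪ {l})`, so the creation factors send `Ω` to `±∏_{L ∪ J} √λ · e (∅, L ∪ J)`.
For `l ∉ A`, `a_l e (A, B)` either puts `l` into `A` with weight `±√(1-λ_l)` or, when `l ∈ B`,
removes it from `B` with weight `±√λ_l`. Applying the factors `a_i`, `a_l` therefore produces a
sum over the set `E ⊆ (I ∪ L) ∩ (L ∪ J) = L` of removed indices; with `L₁ = L \ E` every
coefficient is a sign times a product of square roots of numbers in `(0, 1)`.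
-/

/- The concrete quasi-free CAR model: `H = ℓ²(Finset ℤ × Finset ℤ)` with orthonormal basis
`e (A, B)`, vacuum `Ω = e (∅, ∅)`, and operators `a l`, `b l`, `G` given on the basis by the
quasi-free formulas with symbol `λ` (diagonal, `R h_l = λ_l h_l`). -/

noncomputable section

/-- The GNS Hilbert space: `ℓ²` over pairs of finite subsets of `ℤ`. -/
abbrev CARSpace := lp (fun _ : Finset ℤ × Finset ℤ => ℂ) 2

/-- The orthonormal basis vector `e_{(A,B)}`. -/
def carE (p : Finset ℤ × Finset ℤ) : CARSpace := lp.single 2 p 1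

/-- The vacuum vector `Ω = e_{(∅,∅)}`. -/
def carΩ : CARSpace := carE (∅, ∅)

/-- `n(l, X)` = number of elements of `X` strictly below `l`. -/
def nlt (l : ℤ) (X : Finset ℤ) : ℕ := (X.filter fun j => j < l).card

/-- `a` is the family of quasi-free annihilation-type operators `a_l = π_R(a(h_l))`:
`a_l e_{(A,B)} = √(1−λ_l)·(−1)^{|B|}·(−1)^{n(l,A)}·[l ∉ A]·e_{(A∪{l},B)}
              + √(λ_l)·(−1)^{n(l,B)}·[l ∈ B]·e_{(A,B∖{l})}`. -/
def IsCAR_a (lam : ℤ → ℝ) (a : ℤ → CARSpace →L[ℂ] CARSpace) : Prop :=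
  ∀ (l : ℤ) (A B : Finset ℤ),
    a l (carE (A, B)) =
      ((Real.sqrt (1 - lam l) : ℂ) * (-1) ^ B.card * (-1) ^ nlt l A *
          (if l ∈ A then 0 else 1)) • carE (insert l A, B) +
      ((Real.sqrt (lam l) : ℂ) * (-1) ^ nlt l B *
          (if l ∈ B then 1 else 0)) • carE (A, B.erase l)

/-- `b` is the family of commutant quasi-free operators:
`b_l e_{(A,B)} = √(λ_l)·(−1)^{|B|}·(−1)^{n(l,A)}·[l ∉ A]·e_{(A∪{l},B)}
              − √(1−λ_l)·(−1)^{n(l,B)}·[l ∈ B]·e_{(A,B∖{l})}`. -/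
def IsCAR_b (lam : ℤ → ℝ) (b : ℤ → CARSpace →L[ℂ] CARSpace) : Prop :=
  ∀ (l : ℤ) (A B : Finset ℤ),
    b l (carE (A, B)) =
      ((Real.sqrt (lam l) : ℂ) * (-1) ^ B.card * (-1) ^ nlt l A *
          (if l ∈ A then 0 else 1)) • carE (insert l A, B) -
      ((Real.sqrt (1 - lam l) : ℂ) * (-1) ^ nlt l B *
          (if l ∈ B then 1 else 0)) • carE (A, B.erase l)

/-- `G = Γ⊗Γ` : `G e_{(A,B)} = (−1)^{|A|+|B|} e_{(A,B)}`. -/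
def IsCAR_G (G : CARSpace →L[ℂ] CARSpace) : Prop :=
  ∀ (A B : Finset ℤ), G (carE (A, B)) = ((-1 : ℂ) ^ (A.card + B.card)) • carE (A, B)

open Finset
open scoped InnerProductSpace

lemma carE_apply (p q : Finset ℤ × Finset ℤ) : carE p q = if q = p then 1 else 0 := by
  simp [carE, lp.single_apply, Pi.single_apply]

lemma inner_carE_left (p : Finset ℤ × Finset ℤ) (f : CARSpace) :
    ⟪carE p, f⟫_ℂ = f p := by
  simp [carE, lp.inner_single_left]

lemma inner_carE_carE (p q : Finset ℤ × Finset ℤ) :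
    ⟪carE p, carE q⟫_ℂ = if p = q then 1 else 0 := by
  rw [inner_carE_left, carE_apply]

lemma Finset.nodup_sort_append_sort {α : Type*} [LinearOrder α] {s t : Finset α}
    (h : Disjoint s t) :
    (s.sort (· ≤ ·) ++ t.sort (· ≤ ·)).Nodup :=
  List.nodup_append.2 ⟨sort_nodup _ _, sort_nodup _ _, fun _ hx _ hy hxy =>
    disjoint_left.1 h (by simpa using hx) (by simpa [hxy] using hy)⟩

lemma nlt_insert_self (l : ℤ) (B : Finset ℤ) : nlt l (insert l B) = nlt l B := by
  simp [nlt, filter_insert]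

namespace IsCAR_a

variable {lam : ℤ → ℝ} {a : ℤ → CARSpace →L[ℂ] CARSpace}

lemma apply_carE_of_notMem (ha : IsCAR_a lam a) {l : ℤ} {A B : Finset ℤ} (hA : l ∉ A)
    (hB : l ∉ B) :
    a l (carE (A, B)) =
      (((-1) ^ (#B + nlt l A) * √(1 - lam l) : ℝ) : ℂ) • carE (insert l A, B) := by
  rw [ha, if_neg hA, if_neg hB, mul_zero, zero_smul, add_zero, mul_one]
  congr 1
  push_cast
  ring

lemma apply_carE_of_notMem_of_mem (ha : IsCAR_a lam a) {l : ℤ} {A B : Finset ℤ} (hA : l ∉ A)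
    (hB : l ∈ B) :
    a l (carE (A, B)) =
      (((-1) ^ (#B + nlt l A) * √(1 - lam l) : ℝ) : ℂ) • carE (insert l A, B) +
        (((-1) ^ nlt l B * √(lam l) : ℝ) : ℂ) • carE (A, B.erase l) := by
  rw [ha, if_neg hA, if_pos hB, mul_one, mul_one]
  congr 2 <;> push_cast <;> ring

lemma star_apply_carE (ha : IsCAR_a lam a) {l : ℤ} {A B : Finset ℤ} (hA : l ∉ A)
    (hB : l ∉ B) :
    star (a l) (carE (A, B)) =
      (((-1) ^ nlt l B * √(lam l) : ℝ) : ℂ) • carE (A, insert l B) := by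
  refine lp.ext (funext fun q => ?_)
  obtain ⟨C, D⟩ := q
  rw [← inner_carE_left, ContinuousLinearMap.star_eq_adjoint,
    ContinuousLinearMap.adjoint_inner_right, ha, inner_add_left, inner_smul_left,
    inner_smul_left, inner_carE_carE, inner_carE_carE, lp.coeFn_smul, Pi.smul_apply, carE_apply]
  have hCD : (insert l C, D) ≠ (A, B) := fun h => hA (by simp [← (Prod.mk.inj h).1])
  by_cases hD : l ∈ D
  · have hiff : (C, D.erase l) = (A, B) ↔ (C, D) = (A, insert l B) := by
      rw [Prod.mk.injEq, Prod.mk.injEq, erase_eq_iff_eq_insert hD hB]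
    rw [if_neg hCD, if_pos hD]
    simp only [hiff]
    by_cases h : (C, D) = (A, insert l B)
    · obtain ⟨rfl, rfl⟩ := Prod.mk.inj h
      simp [nlt_insert_self, mul_comm]
    · simp [h]
  · have hne : (C, D) ≠ (A, insert l B) := fun h => hD (by simp [(Prod.mk.inj h).2])
    rw [if_neg hCD, if_neg hD, if_neg hne]
    simp

lemma listProd_star_apply_carE (ha : IsCAR_a lam a) {A B : Finset ℤ} :
    ∀ ls : List ℤ, ls.Nodup → (∀ x ∈ ls, x ∉ A ∧ x ∉ B) →
      ∃ k : ℕ, (ls.map fun l => star (a l)).prod (carE (A, B)) =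
        (((-1) ^ k * ∏ l ∈ ls.toFinset, √(lam l) : ℝ) : ℂ) • carE (A, ls.toFinset ∪ B)
  | [], _, _ => ⟨0, by simp⟩
  | x :: t, hnd, hdisj => by
    obtain ⟨hxt, hnd⟩ := List.nodup_cons.mp hnd
    obtain ⟨hxA, hxB⟩ := hdisj x List.mem_cons_self
    obtain ⟨k, hk⟩ :=
      listProd_star_apply_carE ha t hnd fun y hy => hdisj y (List.mem_cons_of_mem _ hy)
    have hx : x ∉ t.toFinset ∪ B := by simp [hxt, hxB]
    refine ⟨k + nlt x (t.toFinset ∪ B), ?_⟩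
    rw [List.map_cons, List.prod_cons, mul_apply_eq_comp, hk, map_smul,
      ha.star_apply_carE hxA hx, smul_smul, List.toFinset_cons, insert_union,
      prod_insert (by simpa using hxt)]
    congr 1
    push_cast
    ring

lemma listProd_apply_carE (ha : IsCAR_a lam a) {A : Finset ℤ} :
    ∀ ls : List ℤ, ls.Nodup → (∀ x ∈ ls, x ∉ A) → ∀ B : Finset ℤ,
      ∃ k : Finset ℤ → ℕ, (ls.map a).prod (carE (A, B)) =
        ∑ E ∈ (ls.toFinset ∩ B).powerset,
          (((-1) ^ k E * (∏ l ∈ ls.toFinset \ E, √(1 - lam l)) * ∏ l ∈ E, √(lam l) : ℝ) : ℂ) •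
            carE (A ∪ (ls.toFinset \ E), B \ E)
  | [], _, _, B => ⟨0, by simp⟩
  | x :: t, hnd, hdisj, B => by
    obtain ⟨hxt, hnd⟩ := List.nodup_cons.mp hnd
    replace hxt : x ∉ t.toFinset := by simpa using hxt
    have hxA : x ∉ A := hdisj x List.mem_cons_self
    obtain ⟨k, hk⟩ :=
      listProd_apply_carE ha t hnd (fun y hy => hdisj y (List.mem_cons_of_mem _ hy)) B
    refine ⟨fun E => if x ∈ E then k (E.erase x) + nlt x (B \ E.erase x)
      else k E + (#(B \ E) + nlt x (A ∪ (t.toFinset \ E))), ?_⟩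
    have hxE : ∀ E ∈ (t.toFinset ∩ B).powerset, x ∉ E := fun E hE hx =>
      hxt (mem_inter.mp (mem_powerset.mp hE hx)).1
    have hxAE : ∀ E, x ∉ A ∪ (t.toFinset \ E) := by simp [hxA, hxt]
    have hcreate : ∀ E, x ∉ E →
        insert x (A ∪ (t.toFinset \ E)) = A ∪ (insert x t.toFinset \ E) := fun E hxE => by
      rw [insert_sdiff_of_notMem _ hxE, union_insert]
    have hprod : ∀ E, x ∉ E → ∏ l ∈ insert x t.toFinset \ E, √(1 - lam l) =
        √(1 - lam x) * ∏ l ∈ t.toFinset \ E, √(1 - lam l) := fun E hxE => by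
      rw [insert_sdiff_of_notMem _ hxE, prod_insert (by simp [hxt])]
    rw [List.map_cons, List.prod_cons, mul_apply_eq_comp, hk, map_sum, List.toFinset_cons]
    by_cases hxB : x ∈ B
    · rw [insert_inter_of_mem hxB, sum_powerset_insert (fun h => hxt (mem_inter.mp h).1),
        ← sum_add_distrib]
      refine sum_congr rfl fun E hE => ?_
      have hxE := hxE E hE
      have hannih : insert x t.toFinset \ insert x E = t.toFinset \ E := by
        rw [insert_sdiff_insert, sdiff_insert_of_notMem (by simp [hxt])]
      dsimp only
      rw [map_smul, ha.apply_carE_of_notMem_of_mem (hxAE E) (by simp [hxB, hxE]), smul_add,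
        smul_smul, smul_smul, if_neg hxE, if_pos (mem_insert_self x E), erase_insert hxE,
        hcreate E hxE, hprod E hxE, hannih, sdiff_insert, prod_insert hxE]
      congr 2 <;> push_cast <;> ring
    · rw [insert_inter_of_notMem hxB]
      refine sum_congr rfl fun E hE => ?_
      have hxE := hxE E hE
      dsimp only
      rw [map_smul, ha.apply_carE_of_notMem (hxAE E) (by simp [hxB]), smul_smul, if_neg hxE,
        hcreate E hxE, hprod E hxE]
      congr 1
      push_cast
      ring

lemma sortReverse_star_apply_carΩ (ha : IsCAR_a lam a) {L J : Finset ℤ} (hLJ : Disjoint L J) :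
    ∃ k : ℕ, (((L.sort (· ≤ ·)).reverse.map fun l => star (a l)).prod *
        ((J.sort (· ≤ ·)).reverse.map fun l => star (a l)).prod) carΩ =
      (((-1) ^ k * ∏ l ∈ L ∪ J, √(lam l) : ℝ) : ℂ) • carE (∅, L ∪ J) := by
  rw [← List.prod_append, ← List.map_append, carΩ]
  obtain ⟨k, hk⟩ := ha.listProd_star_apply_carE (A := ∅) (B := ∅)
    ((L.sort (· ≤ ·)).reverse ++ (J.sort (· ≤ ·)).reverse)
    (by rw [← List.reverse_append, List.nodup_reverse]; exact nodup_sort_append_sort hLJ.symm)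
    (by simp)
  exact ⟨k, by simpa only [List.toFinset_append, List.toFinset_reverse, sort_toFinset,
    union_empty] using hk⟩

lemma sort_apply_carE (ha : IsCAR_a lam a) {I L J : Finset ℤ} (hIJ : Disjoint I J)
    (hIL : Disjoint I L) (hLJ : Disjoint L J) :
    ∃ k : Finset ℤ → ℕ, (((I.sort (· ≤ ·)).map a).prod * ((L.sort (· ≤ ·)).map a).prod)
        (carE (∅, L ∪ J)) =
      ∑ L₁ ∈ L.powerset, (((-1) ^ k L₁ * (∏ i ∈ I, √(1 - lam i)) *
          (∏ l ∈ L₁, √(1 - lam l)) * ∏ l ∈ L \ L₁, √(lam l) : ℝ) : ℂ) •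
        carE (I ∪ L₁, L₁ ∪ J) := by
  have hIL_LJ : (I ∪ L) ∩ (L ∪ J) = L := by
    ext x
    have hxIL : x ∈ I → x ∉ L := fun h => disjoint_left.1 hIL h
    have hxIJ : x ∈ I → x ∉ J := fun h => disjoint_left.1 hIJ h
    simp only [mem_inter, mem_union]
    tauto
  rw [← List.prod_append, ← List.map_append]
  obtain ⟨k, hk⟩ := ha.listProd_apply_carE (A := ∅) _ (nodup_sort_append_sort hIL) (by simp)
    (L ∪ J)
  simp only [List.toFinset_append, sort_toFinset, empty_union, hIL_LJ] at hk
  refine ⟨fun L₁ => k (L \ L₁), hk.trans ?_⟩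
  have hcompl : ∀ E ∈ L.powerset, L \ (L \ E) = E := fun E hE =>
    Finset.sdiff_sdiff_eq_self (mem_powerset.1 hE)
  refine sum_nbij' (L \ ·) (L \ ·) (fun _ _ => mem_powerset.2 sdiff_subset)
    (fun _ _ => mem_powerset.2 sdiff_subset) hcompl hcompl fun E hE => ?_
  have hEL := mem_powerset.1 hE
  have hI : (I ∪ L) \ E = I ∪ (L \ E) := by
    rw [union_sdiff_distrib, sdiff_eq_self_of_disjoint (disjoint_of_subset_right hEL hIL)]
  have hJ : (L ∪ J) \ E = (L \ E) ∪ J := by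
    rw [union_sdiff_distrib, sdiff_eq_self_of_disjoint (disjoint_of_subset_left hEL hLJ).symm]
  dsimp only
  rw [hcompl E hE, hI, hJ, prod_union (disjoint_of_subset_right sdiff_subset hIL)]
  congr 1
  push_cast
  ring

end IsCAR_a

def vacuumCoeff (lam : ℤ → ℝ) (L L₁ : Finset ℤ) : ℝ :=
  (∏ l ∈ L, √(lam l)) * (∏ l ∈ L₁, √(1 - lam l)) * ∏ l ∈ L \ L₁, √(lam l)

lemma vacuumCoeff_pos {lam : ℤ → ℝ} (hlam : ∀ l, 0 < lam l ∧ lam l < 1)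
    (L L₁ : Finset ℤ) :
    0 < vacuumCoeff lam L L₁ := by
  have hsqrt : ∀ l, 0 < √(lam l) := fun l => Real.sqrt_pos.2 (hlam l).1
  have hsqrt_one_sub : ∀ l, 0 < √(1 - lam l) := fun l => Real.sqrt_pos.2 (sub_pos.2 (hlam l).2)
  unfold vacuumCoeff
  exact mul_pos (mul_pos (prod_pos fun l _ => hsqrt l) (prod_pos fun l _ => hsqrt_one_sub l))
    (prod_pos fun l _ => hsqrt l)

/-- let `L = {l₁ < ... < l_p}` be a finite subset of `ℤ`. Then there is a
function `c` assigning to each `L₁ ⊆ L` a nonzero real `c(L₁)` such that for all finite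
`I = {i₁ < ... < i_n}`, `J = {j₁ < ... < j_m}` with `I, J, L` pairwise disjoint there are
signs `σ(I,L₁,J) ∈ {±1}` with
`(a_{i₁}∘⋯∘a_{i_n})∘(a_{l₁}∘⋯∘a_{l_p})∘(a_{l_p}*∘⋯∘a_{l₁}*)∘(a_{j_m}*∘⋯∘a_{j₁}*) Ω
  = Σ_{L₁ ⊆ L} σ·(∏_{i∈I}√(1−λ_i))·(∏_{j∈J}√(λ_j))·c(L₁)·e_{(I∪L₁, L₁∪J)}`. -/
theorem stmt11 (lam : ℤ → ℝ) (hlam : ∀ l, 0 < lam l ∧ lam l < 1)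
    (a : ℤ → CARSpace →L[ℂ] CARSpace) (ha : IsCAR_a lam a)
    (L : Finset ℤ) :
    ∃ c : Finset ℤ → ℝ, (∀ L₁ ⊆ L, c L₁ ≠ 0) ∧
      ∀ I J : Finset ℤ, Disjoint I J → Disjoint I L → Disjoint L J →
        ∃ σ : Finset ℤ → ℝ, (∀ L₁ ⊆ L, σ L₁ = 1 ∨ σ L₁ = -1) ∧
          (((I.sort (· ≤ ·)).map a).prod *
              ((L.sort (· ≤ ·)).map a).prod *
              ((L.sort (· ≤ ·)).reverse.map fun l => star (a l)).prod *
              ((J.sort (· ≤ ·)).reverse.map fun l => star (a l)).prod) carΩ =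
            ∑ L₁ ∈ L.powerset,
              ((σ L₁ * (∏ i ∈ I, Real.sqrt (1 - lam i)) *
                  (∏ j ∈ J, Real.sqrt (lam j)) * c L₁ : ℝ) : ℂ) •
                carE (I ∪ L₁, L₁ ∪ J) := by
  refine ⟨vacuumCoeff lam L, fun L₁ _ => (vacuumCoeff_pos hlam L L₁).ne', ?_⟩
  intro I J hIJ hIL hLJ
  obtain ⟨k₀, hcreate⟩ := ha.sortReverse_star_apply_carΩ hLJ
  obtain ⟨k, hannih⟩ := ha.sort_apply_carE hIJ hIL hLJ
  refine ⟨fun L₁ => (-1) ^ (k₀ + k L₁), fun _ _ => neg_one_pow_eq_or ℝ _, ?_⟩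
  rw [mul_assoc, mul_apply_eq_comp, hcreate, map_smul, hannih, smul_sum]
  refine sum_congr rfl fun L₁ _ => ?_
  rw [smul_smul, vacuumCoeff, prod_union hLJ]
  congr 1
  push_cast
  ring

end
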